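/- The extended inner angles satisfy θ̃_1(l) + θ̃_2(l) + θ̃_3(l) = π for all l ∈ ℝ_{>0}³. -/

import Mathlib

/-- The two indices of `Fin 3` other than the given one. -/
def others : Fin 3 → Fin 3 × Fin 3
  | 0 => (1, 2)
  | 1 => (0, 2)
  | 2 => (0, 1)

/-- `l` satisfies the strict triangle inequalities. -/
def IsTriangle (l : Fin 3 → ℝ) : Prop :=
  l 0 < l 1 + l 2 ∧ l 1 < l 0 + l 2 ∧ l 2 < l 0 + l 1

open Classical in
/-- The extended inner angle at vertex `i` of the (generalized) triangle with side
lengths `l` (`l i` is the side opposite vertex `i`): given by the law of cosines for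
genuine triangles, and `π` (resp. `0`) at the vertex whose opposite side is too long
(resp. at the other two vertices) for degenerate ones. -/
noncomputable def extAng (l : Fin 3 → ℝ) (i : Fin 3) : ℝ :=
  let j := (others i).1
  let k := (others i).2
  if IsTriangle l then
    Real.arccos ((l j ^ 2 + l k ^ 2 - l i ^ 2) / (2 * l j * l k))
  else if l j + l k ≤ l i then Real.pi
  else 0

lemma arccos_antitone {x y : ℝ} (h : x ≤ y) : Real.arccos y ≤ Real.arccos x := by
  rw [Real.arccos_eq_pi_div_two_sub_arcsin, Real.arccos_eq_pi_div_two_sub_arcsin]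
  have := Real.monotone_arcsin h
  linarith

lemma arccos_triangle_sum (a b c : ℝ) (ha : 0 < a) (hb : 0 < b) (hc : 0 < c)
    (h1 : a < b + c) (h2 : b < a + c) (h3 : c < a + b) :
    Real.arccos ((b ^ 2 + c ^ 2 - a ^ 2) / (2 * b * c))
      + Real.arccos ((a ^ 2 + c ^ 2 - b ^ 2) / (2 * a * c))
      + Real.arccos ((a ^ 2 + b ^ 2 - c ^ 2) / (2 * a * b)) = Real.pi := by
  set A : ℝ := (b ^ 2 + c ^ 2 - a ^ 2) / (2 * b * c) with hAdef
  set B : ℝ := (a ^ 2 + c ^ 2 - b ^ 2) / (2 * a * c) with hBdef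
  set C : ℝ := (a ^ 2 + b ^ 2 - c ^ 2) / (2 * a * b) with hCdef
  have hA1 : -1 ≤ A := by
    rw [hAdef, le_div_iff₀ (by positivity)]; nlinarith
  have hA2 : A ≤ 1 := by
    rw [hAdef, div_le_one (by positivity)]
    nlinarith [mul_pos (by linarith : (0:ℝ) < a + c - b) (by linarith : (0:ℝ) < a + b - c)]
  have hB1 : -1 ≤ B := by
    rw [hBdef, le_div_iff₀ (by positivity)]; nlinarith
  have hB2 : B ≤ 1 := by
    rw [hBdef, div_le_one (by positivity)]
    nlinarith [mul_pos (by linarith : (0:ℝ) < b + c - a) (by linarith : (0:ℝ) < a + b - c)]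
  set α := Real.arccos A with hα
  set β := Real.arccos B with hβ
  have hcosα : Real.cos α = A := Real.cos_arccos hA1 hA2
  have hcosβ : Real.cos β = B := Real.cos_arccos hB1 hB2
  set S : ℝ := (a + b + c) * (-a + b + c) * (a - b + c) * (a + b - c) with hSdef
  have hS : 0 ≤ S := by
    have := mul_pos (mul_pos (mul_pos (by linarith : (0:ℝ) < a + b + c)
      (by linarith : (0:ℝ) < -a + b + c)) (by linarith : (0:ℝ) < a - b + c))
      (by linarith : (0:ℝ) < a + b - c)
    rw [hSdef]; linarith
  have hprod : Real.sin α * Real.sin β = S / (4 * a * b * c ^ 2) := by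
    rw [hα, hβ, Real.sin_arccos, Real.sin_arccos,
      ← Real.sqrt_mul (by nlinarith : (0:ℝ) ≤ 1 - A ^ 2)]
    have hsq : (1 - A ^ 2) * (1 - B ^ 2) = (S / (4 * a * b * c ^ 2)) ^ 2 := by
      rw [hAdef, hBdef, hSdef]; field_simp; ring
    rw [hsq, Real.sqrt_sq (by positivity)]
  have hAB : 0 ≤ A + B := by
    rw [hAdef, hBdef, div_add_div _ _ (by positivity) (by positivity)]
    apply div_nonneg _ (by positivity)
    nlinarith [mul_pos (mul_pos (by linarith : (0:ℝ) < a + b)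
      (by linarith : (0:ℝ) < c - a + b)) (by linarith : (0:ℝ) < c + a - b), hc.le]
  have hβle : β ≤ Real.pi - α := by
    have h := arccos_antitone (by linarith : -A ≤ B)
    rwa [Real.arccos_neg, ← hα, ← hβ] at h
  have hα0 : 0 ≤ α := Real.arccos_nonneg A
  have hβ0 : 0 ≤ β := Real.arccos_nonneg B
  have hcosC : Real.cos (Real.pi - (α + β)) = C := by
    rw [Real.cos_pi_sub, Real.cos_add, hcosα, hcosβ, hprod, hCdef, hAdef, hBdef]
    field_simp
    ring
  have hfin : Real.arccos C = Real.pi - (α + β) := by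
    rw [← hcosC]
    exact Real.arccos_cos (by linarith) (by linarith)
  rw [hfin]; ring

lemma others0 : others 0 = (1, 2) := rfl
lemma others1 : others 1 = (0, 2) := rfl
lemma others2 : others 2 = (0, 1) := rfl

theorem extAng_sum_eq_pi (l : Fin 3 → ℝ) (hl : ∀ i, 0 < l i) :
    extAng l 0 + extAng l 1 + extAng l 2 = Real.pi := by
  have h0 := hl 0; have h1 := hl 1; have h2 := hl 2
  by_cases hT : IsTriangle l
  · obtain ⟨t0, t1, t2⟩ := hT
    have hT : IsTriangle l := ⟨t0, t1, t2⟩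
    simp only [extAng, others0, others1, others2]
    rw [if_pos hT, if_pos hT, if_pos hT]
    exact arccos_triangle_sum (l 0) (l 1) (l 2) h0 h1 h2 t0 t1 t2
  · simp only [extAng, others0, others1, others2, if_neg hT]
    rw [IsTriangle, not_and_or, not_and_or] at hT
    push_neg at hT
    rcases hT with h | h | h
    · simp only [h, (show ¬(l 0 + l 2 ≤ l 1) by linarith), (show ¬(l 0 + l 1 ≤ l 2) by linarith), if_true, if_false]; ring
    · simp only [(show ¬(l 1 + l 2 ≤ l 0) by linarith), h, (show ¬(l 0 + l 1 ≤ l 2) by linarith), if_true, if_false]; ring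
    · simp only [(show ¬(l 1 + l 2 ≤ l 0) by linarith), (show ¬(l 0 + l 2 ≤ l 1) by linarith), h, if_true, if_false]; ring
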